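/- arXiv:2011.10462 — 4 statements merged into one kernel-verified Lean document; each statement's English description precedes it below -/
import Mathlib

section
/- For two intervals A = [a₁,a₂] and B = [b₁,b₂], A ⊀ B (A does not strictly dominate B) holds if and only if A ⊖_gH B ⊀ [0,0]. Here A ≺ B means (a₁ ≤ b₁ and a₂ < b₂) or (a₁ < b₁ and a₂ ≤ b₂). -/
structure IV where
  lo : ℝ
  hi : ℝ
  isle : lo ≤ hi

namespace IV

theorem ext' {A B : IV} (h1 : A.lo = B.lo) (h2 : A.hi = B.hi) : A = B := by
  cases A; cases B; simp_all

/-- interval addition -/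
def add (A B : IV) : IV := ⟨A.lo + B.lo, A.hi + B.hi, add_le_add A.isle B.isle⟩

/-- scalar multiplication -/
def smul (l : ℝ) (A : IV) : IV := ⟨min (l * A.lo) (l * A.hi), max (l * A.lo) (l * A.hi), min_le_max⟩

/-- generalized Hukuhara difference -/
def gh (A B : IV) : IV :=
  ⟨min (A.lo - B.lo) (A.hi - B.hi), max (A.lo - B.lo) (A.hi - B.hi), min_le_max⟩

/-- the degenerate interval [0,0] -/
def zero : IV := ⟨0, 0, le_refl 0⟩

/-- dominance relation A ⪯ B -/
def dom (A B : IV) : Prop := A.lo ≤ B.lo ∧ A.hi ≤ B.hi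

/-- strict dominance A ≺ B -/
def sdom (A B : IV) : Prop := (A.lo ≤ B.lo ∧ A.hi < B.hi) ∨ (A.lo < B.lo ∧ A.hi ≤ B.hi)

/-- interval norm -/
def nrm (A : IV) : ℝ := max |A.lo| |A.hi|

end IV

theorem stmt2 (A B : IV) : ¬ IV.sdom A B ↔ ¬ IV.sdom (IV.gh A B) IV.zero := by
  have key : ∀ x y : ℝ, ((min x y ≤ (0:ℝ) ∧ max x y < 0) ∨ (min x y < 0 ∧ max x y ≤ 0)) ↔
      ((x ≤ 0 ∧ y < 0) ∨ (x < 0 ∧ y ≤ 0)) := by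
    intro x y
    rcases le_total x y with h | h <;>
      simp [min_eq_left, min_eq_right, max_eq_left, max_eq_right, h] <;>
      constructor <;> rintro (⟨h1, h2⟩ | ⟨h1, h2⟩) <;>
      first
        | exact Or.inl ⟨by linarith, by linarith⟩
        | exact Or.inr ⟨by linarith, by linarith⟩
  have : IV.sdom A B ↔ IV.sdom (IV.gh A B) IV.zero := by
    simp only [IV.sdom, IV.gh, IV.zero]
    rw [key]
    constructor <;> rintro (⟨h1, h2⟩ | ⟨h1, h2⟩) <;>
      first
        | exact Or.inl ⟨by linarith, by linarith⟩
        | exact Or.inr ⟨by linarith, by linarith⟩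
  rw [this]
end

section
/- The interval-valued function F(x₁,x₂) = x₁ ⊙ [-1,1] ⊕ x₂ ⊙ [0,2] on ℝ² is not gH-differentiable at the point x̄ = (0,1): specifically, along directions d = (t,-t) with t → 0⁺, the quotient (1/‖d‖) ⊙ ((F(x̄+d) ⊖_gH F(x̄)) ⊖_gH dᵀ ⊙ ∇F(x̄)) converges to √2 ⊙ [-1,1] ≠ [0,0], where dᵀ ⊙ ∇F(x̄) = d₁ ⊙ [-1,1] ⊕ d₂ ⊙ [0,2]. -/
set_option maxHeartbeats 1600000 in
/-- The linear interval-valued function `F(x₁,x₂) = x₁ ⊙ [-1,1] ⊕ x₂ ⊙ [0,2]`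
is not gH-differentiable at `x̄ = (0,1)`: along directions `d = (t,-t)`, `t > 0`
with `‖d‖ = √2 t < 1/2`, the gH-difference quotient with respect to the
candidate linear map `dᵀ ⊙ ∇F(x̄) = d₁ ⊙ [-1,1] ⊕ d₂ ⊙ [0,2]` is constantly
`√2 ⊙ [-1,1] ≠ [0,0]`; hence it tends to `√2 ⊙ [-1,1]` as `t → 0⁺`. -/
theorem stmt11 :
    let A₁ : IV := ⟨-1, 1, by norm_num⟩
    let A₂ : IV := ⟨0, 2, by norm_num⟩
    let F : ℝ × ℝ → IV := fun x => IV.add (IV.smul x.1 A₁) (IV.smul x.2 A₂)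
    (∀ t : ℝ, 0 < t → Real.sqrt 2 * t < 1 / 2 →
      IV.smul (1 / (Real.sqrt 2 * t))
        (IV.gh (IV.gh (F (0 + t, 1 + (-t))) (F (0, 1)))
          (IV.add (IV.smul t A₁) (IV.smul (-t) A₂)))
      = IV.smul (Real.sqrt 2) ⟨-1, 1, by norm_num⟩) ∧
    IV.smul (Real.sqrt 2) ⟨-1, 1, by norm_num⟩ ≠ IV.zero := by
  intro A₁ A₂ F
  have hs1 : (1:ℝ) < Real.sqrt 2 := by
    nlinarith [Real.sq_sqrt (show (0:ℝ) ≤ 2 by norm_num),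
      Real.sqrt_nonneg 2]
  have hs : (0:ℝ) < Real.sqrt 2 := by linarith
  have key : Real.sqrt 2 * Real.sqrt 2 = 2 := Real.mul_self_sqrt (by norm_num)
  constructor
  · intro t ht hlt
    have ht2 : t < 1 / 2 := by nlinarith
    have hst : (0:ℝ) < Real.sqrt 2 * t := by positivity
    have e1 : F (0 + t, 1 + (-t)) = ⟨-t, 2 - t, by nlinarith⟩ := by
      apply IV.ext' <;>
        simp only [F, IV.add, IV.smul, min_def, max_def] <;>
        split_ifs <;> nlinarith
    have e2 : F (0, 1) = ⟨0, 2, by norm_num⟩ := by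
      apply IV.ext' <;>
        simp only [F, IV.add, IV.smul, min_def, max_def] <;>
        split_ifs <;> nlinarith
    have e3 : IV.gh (⟨-t, 2 - t, by nlinarith⟩ : IV) ⟨0, 2, by norm_num⟩
        = ⟨-t, -t, le_refl _⟩ := by
      apply IV.ext' <;> simp only [IV.gh, min_def, max_def] <;>
        split_ifs <;> nlinarith
    have e4 : IV.add (IV.smul t A₁) (IV.smul (-t) A₂)
        = ⟨-3 * t, t, by nlinarith⟩ := by
      apply IV.ext' <;>
        simp only [A₁, A₂, IV.add, IV.smul, min_def, max_def] <;>
        split_ifs <;> nlinarith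
    have e5 : IV.gh (⟨-t, -t, le_refl _⟩ : IV) ⟨-3 * t, t, by nlinarith⟩
        = ⟨-2 * t, 2 * t, by nlinarith⟩ := by
      apply IV.ext' <;> simp only [IV.gh, min_def, max_def] <;>
        split_ifs <;> nlinarith
    rw [e1, e2, e3, e4, e5]
    apply IV.ext' <;>
      simp only [IV.smul, min_def, max_def] <;>
      split_ifs <;> field_simp <;>
        nlinarith [key, mul_pos (show (0:ℝ) < 1 / (Real.sqrt 2 * t) by positivity) ht]
  · intro h
    have := congrArg IV.hi h
    simp only [IV.smul, IV.zero, max_def] at this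
    split_ifs at this <;> nlinarith
end

section
/- For any interval A = [a₁, a₂] (a₁ ≤ a₂) and any weights w, w' ∈ [0,1] with w + w' = 1, the interval (w·a₁ + w'·a₂) ⊙ [a₁, a₂] is not strictly dominated by [0,0], i.e., (w·a₁ + w'·a₂) ⊙ [a₁,a₂] ⊀ [0,0]. -/
/-- For any interval `[a₁,a₂]` and weights `w + w' = 1`, `w, w' ∈ [0,1]`,
the interval `(w a₁ + w' a₂) ⊙ [a₁, a₂]` is not strictly dominated by `[0,0]`. -/
theorem stmt14 (a₁ a₂ : ℝ) (h : a₁ ≤ a₂) (w w' : ℝ)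
    (hw : 0 ≤ w) (hw' : 0 ≤ w') (hww : w + w' = 1) :
    ¬ IV.sdom (IV.smul (w * a₁ + w' * a₂) ⟨a₁, a₂, h⟩) IV.zero := by
  have e1 : w * a₁ + w' * a₁ = a₁ := by rw [← add_mul, hww, one_mul]
  have e2 : w * a₂ + w' * a₂ = a₂ := by rw [← add_mul, hww, one_mul]
  set l := w * a₁ + w' * a₂ with hl
  have hla : a₁ ≤ l := by nlinarith [mul_nonneg hw' (sub_nonneg.mpr h)]
  have hlb : l ≤ a₂ := by nlinarith [mul_nonneg hw (sub_nonneg.mpr h)]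
  have hmax : l * l ≤ max (l * a₁) (l * a₂) := by
    rcases le_or_gt 0 l with h0 | h0
    · exact le_trans (by nlinarith) (le_max_right _ _)
    · exact le_trans (by nlinarith) (le_max_left _ _)
  have hsq : (0:ℝ) ≤ l * l := mul_self_nonneg l
  rintro (⟨h1, h2⟩ | ⟨h1, h2⟩) <;>
    simp only [IV.smul, IV.zero] at h1 h2
  · linarith
  · have hl0 : l = 0 := by nlinarith
    rw [hl0] at h1; simp at h1
end

section
/- Let Ā = (A₁,…,Aₙ) and B̄ = (B₁,…,Bₙ) be n-tuples of intervals, h ∈ ℝⁿ, and w, w' ∈ [0,1] with w + w' = 1. If [0,0] ⪯ hᵀ ⊙ (Ā ⊖_gH B̄) := ⊕ᵢ hᵢ ⊙ (Aᵢ ⊖_gH Bᵢ), then (W(Ā) − W(B̄))ᵀ h ≥ 0, where W(A₁,…,Aₙ) is the real vector with i-th component w·(lower of Aᵢ) + w'·(upper of Aᵢ). -/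
namespace IV

instance : Add IV := ⟨IV.add⟩
instance : Zero IV := ⟨IV.zero⟩

@[simp] theorem add_lo (A B : IV) : (A + B).lo = A.lo + B.lo := rfl
@[simp] theorem add_hi (A B : IV) : (A + B).hi = A.hi + B.hi := rfl
@[simp] theorem zero_lo : (0 : IV).lo = 0 := rfl
@[simp] theorem zero_hi : (0 : IV).hi = 0 := rfl

instance : AddCommMonoid IV where
  add_assoc a b c := ext' (by simp only [add_lo]; ring) (by simp only [add_hi]; ring)
  zero_add a := ext' (by simp only [add_lo, zero_lo]; ring) (by simp only [add_hi, zero_hi]; ring)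
  add_zero a := ext' (by simp only [add_lo, zero_lo]; ring) (by simp only [add_hi, zero_hi]; ring)
  add_comm a b := ext' (by simp only [add_lo]; ring) (by simp only [add_hi]; ring)
  nsmul := nsmulRec

end IV

/-- If `[0,0] ⪯ hᵀ ⊙ (Ā ⊖_gH B̄)`, then `(W(Ā) − W(B̄))ᵀ h ≥ 0`, where `W`
is the weighted endpoint map with weights `w + w' = 1`. -/
theorem stmt15 {n : ℕ} (A B : Fin n → IV) (v : Fin n → ℝ) (w w' : ℝ)
    (hw : 0 ≤ w) (hw' : 0 ≤ w') (hww : w + w' = 1)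
    (hdom : IV.dom IV.zero (∑ i, IV.smul (v i) (IV.gh (A i) (B i)))) :
    0 ≤ ∑ i, ((w * (A i).lo + w' * (A i).hi) - (w * (B i).lo + w' * (B i).hi)) * v i := by
  have sum_lo : ∀ (f : Fin n → IV), (∑ i, f i).lo = ∑ i, (f i).lo := fun f =>
    map_sum (⟨⟨IV.lo, rfl⟩, fun _ _ => rfl⟩ : IV →+ ℝ) f Finset.univ
  have h0 : (0:ℝ) ≤ ∑ i, (IV.smul (v i) (IV.gh (A i) (B i))).lo := by
    have := hdom.1
    rw [sum_lo] at this
    simpa [IV.zero] using this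
  refine le_trans h0 (Finset.sum_le_sum fun i _ => ?_)
  have h1 : (IV.smul (v i) (IV.gh (A i) (B i))).lo
      ≤ w * (v i * ((A i).lo - (B i).lo)) + w' * (v i * ((A i).hi - (B i).hi)) := by
    simp only [IV.smul, IV.gh]
    calc min (v i * min ((A i).lo - (B i).lo) ((A i).hi - (B i).hi))
          (v i * max ((A i).lo - (B i).lo) ((A i).hi - (B i).hi))
        = (w + w') * min (v i * min ((A i).lo - (B i).lo) ((A i).hi - (B i).hi))
          (v i * max ((A i).lo - (B i).lo) ((A i).hi - (B i).hi)) := by rw [hww]; ring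
      _ ≤ _ := by
          rw [add_mul]
          gcongr
          · rcases le_or_gt 0 (v i) with h | h
            · exact le_trans (min_le_left _ _) (by nlinarith [min_le_left ((A i).lo - (B i).lo) ((A i).hi - (B i).hi)])
            · exact le_trans (min_le_right _ _) (by nlinarith [le_max_left ((A i).lo - (B i).lo) ((A i).hi - (B i).hi)])
          · rcases le_or_gt 0 (v i) with h | h
            · exact le_trans (min_le_left _ _) (by nlinarith [min_le_right ((A i).lo - (B i).lo) ((A i).hi - (B i).hi)])
            · exact le_trans (min_le_right _ _) (by nlinarith [le_max_right ((A i).lo - (B i).lo) ((A i).hi - (B i).hi)])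
  calc (IV.smul (v i) (IV.gh (A i) (B i))).lo ≤ _ := h1
    _ = ((w * (A i).lo + w' * (A i).hi) - (w * (B i).lo + w' * (B i).hi)) * v i := by ring
end
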